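/- Change-of-function property of the Deligne functional: if φ₀ and φ₀′ are two smooth functions on X, then ⟨φ₀′,φ₁,…,φₙ⟩ − ⟨φ₀,φ₁,…,φₙ⟩ = ∫_X (φ₀′ − φ₀) (θ₁+dd^cφ₁)∧…∧(θₙ+dd^cφₙ). -/
import Mathlib


open Finset

/-- The multivariate Deligne energy functional
`⟨φ₀,…,φₙ⟩_{(θ₀,…,θₙ)} := Σ_j ∫_X φ_j θ₀∧…∧θ_{j-1}∧(θ_{j+1}+dd^cφ_{j+1})∧…∧(θₙ+dd^cφₙ)`,
formulated in an abstract commutative ring `A` of forms on the compact Kähler manifold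
`X`, with `intX` integration over `X` and `ddc` the `dd^c`-operator. -/
noncomputable def deligne {A : Type*} [CommRing A] [Algebra ℝ A] (n : ℕ)
    (intX : A →ₗ[ℝ] ℝ) (ddc : A →ₗ[ℝ] A) (θ φ : Fin (n + 1) → A) : ℝ :=
  ∑ j : Fin (n + 1),
    intX (φ j * (∏ i ∈ Finset.univ.filter (fun i => i < j), θ i) *
      ∏ i ∈ Finset.univ.filter (fun i => j < i), (θ i + ddc (φ i)))

/-- Change-of-function property of the Deligne functional: if `φ₀` and
`φ₀′` are two smooth functions on `X`, then
`⟨φ₀′,φ₁,…,φₙ⟩ − ⟨φ₀,φ₁,…,φₙ⟩ = ∫_X (φ₀′ − φ₀) (θ₁+dd^cφ₁)∧…∧(θₙ+dd^cφₙ)`. -/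
theorem deligne_change_of_function {A : Type*} [CommRing A] [Algebra ℝ A] (n : ℕ)
    (intX : A →ₗ[ℝ] ℝ) (ddc : A →ₗ[ℝ] A)
    (θ φ : Fin (n + 1) → A) (φ₀' : A) :
    deligne n intX ddc θ (Function.update φ 0 φ₀') - deligne n intX ddc θ φ =
      intX ((φ₀' - φ 0) *
        ∏ i ∈ Finset.univ.filter (fun i => (0 : Fin (n + 1)) < i), (θ i + ddc (φ i))) := by
  unfold deligne
  rw [← Finset.sum_sub_distrib, Finset.sum_eq_single (0 : Fin (n + 1))]
  · have h1 : ∀ i ∈ Finset.univ.filter (fun i => (0 : Fin (n + 1)) < i),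
        (θ i + ddc (Function.update φ 0 φ₀' i)) = θ i + ddc (φ i) := by
      intro i hi
      rw [Function.update_of_ne (Finset.mem_filter.mp hi).2.ne']
    rw [Finset.prod_congr rfl h1, Function.update_self]
    have h2 : Finset.univ.filter (fun i => i < (0 : Fin (n + 1))) = ∅ := by
      ext i; simp
    rw [h2, Finset.prod_empty, mul_one, mul_one, ← map_sub, ← sub_mul]
  · intro j _ hj
    have hj0 : (0 : Fin (n + 1)) < j := Fin.pos_of_ne_zero hj
    have h1 : ∀ i ∈ Finset.univ.filter (fun i => j < i),
        (θ i + ddc (Function.update φ 0 φ₀' i)) = θ i + ddc (φ i) := by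
      intro i hi
      rw [Function.update_of_ne (hj0.trans (Finset.mem_filter.mp hi).2).ne']
    rw [Finset.prod_congr rfl h1, Function.update_of_ne hj, sub_self]
  · intro h; exact absurd (Finset.mem_univ _) h
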